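/- Let G be a finite simple graph and let n ≥ 2 and d ≥ 1 be integers. Then Γ_{2d+1} G admits a proper n-coloring if and only if there exists a graph homomorphism from G to Ω_{2d+1} K_n. -/

import Mathlib

/-- `HasWalkLen G d u v` means there is a walk of length exactly `d` from `u` to `v` in `G`. -/
def HasWalkLen {V : Type*} (G : SimpleGraph V) (d : ℕ) (u v : V) : Prop :=
  ∃ w : G.Walk u v, w.length = d

/-- `γ` is a proper coloring of the `d`-th power graph `Γ_d G`: any two (not necessarily
distinct) vertices joined by a walk of length exactly `d` receive different colors. -/
def IsWideColoring {V : Type*} (G : SimpleGraph V) (d : ℕ) {m : ℕ} (γ : V → Fin m) : Prop :=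
  ∀ u v : V, HasWalkLen G d u v → γ u ≠ γ v

/-- `N^{=d}(S)`: vertices reachable from `S` by a walk of length exactly `d`. -/
def NExact {V : Type*} (G : SimpleGraph V) (d : ℕ) (S : Set V) : Set V :=
  {v | ∃ s ∈ S, HasWalkLen G d s v}

/-- `N^{≤d}(S)`: vertices reachable from `S` by a walk of length at most `d`. -/
def NLe {V : Type*} (G : SimpleGraph V) (d : ℕ) (S : Set V) : Set V :=
  {v | ∃ s ∈ S, ∃ w : G.Walk s v, w.length ≤ d}

/-- The exponential graph `K_c^G`: vertices are functions `V(G) → {1,…,c}`, distinct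
functions `f, g` adjacent iff `f u ≠ g v` for every edge `uv` of `G`. -/
def expGraph {V : Type*} (c : ℕ) (G : SimpleGraph V) : SimpleGraph (V → Fin c) where
  Adj f g := f ≠ g ∧ ∀ u v : V, G.Adj u v → f u ≠ g v
  symm := by
    refine ⟨?_⟩
    rintro f g ⟨hne, h⟩
    exact ⟨hne.symm, fun u v huv he => h v u huv.symm he.symm⟩
  loopless := ⟨fun f h => h.1 rfl⟩

/-- The tensor (categorical) product `G × H`. -/
def tensorProd {V W : Type*} (G : SimpleGraph V) (H : SimpleGraph W) :
    SimpleGraph (V × W) where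
  Adj p q := G.Adj p.1 q.1 ∧ H.Adj p.2 q.2
  symm := ⟨fun p q h => ⟨h.1.symm, h.2.symm⟩⟩
  loopless := ⟨fun p h => G.irrefl h.1⟩

/-- The lexicographic product `G[H]`. -/
def lexProd {V W : Type*} (G : SimpleGraph V) (H : SimpleGraph W) :
    SimpleGraph (V × W) where
  Adj p q := G.Adj p.1 q.1 ∨ (p.1 = q.1 ∧ H.Adj p.2 q.2)
  symm := by
    refine ⟨?_⟩
    rintro p q (h | ⟨e, h⟩)
    · exact Or.inl h.symm
    · exact Or.inr ⟨e.symm, h.symm⟩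
  loopless := by
    refine ⟨?_⟩
    rintro p (h | ⟨-, h⟩)
    · exact G.irrefl h
    · exact H.irrefl h

/-- Vertices of `Ω_{2d+1} K_n`: tuples in `{0,…,d+1}^n` with exactly one coordinate equal
to `0` and at least one coordinate equal to `1`. -/
def OmegaVert (d n : ℕ) : Type :=
  {x : Fin n → Fin (d + 2) // (∃! i, x i = 0) ∧ ∃ i, x i = 1}

/-- The graph `Ω_{2d+1} K_n`: two tuples adjacent iff in every coordinate they differ by
exactly one, or are both equal to `d+1`. -/
def omegaK (d n : ℕ) : SimpleGraph (OmegaVert d n) where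
  Adj a b := ∀ i, ((a.1 i : ℕ) + 1 = (b.1 i : ℕ) ∨ (b.1 i : ℕ) + 1 = (a.1 i : ℕ))
      ∨ ((a.1 i : ℕ) = d + 1 ∧ (b.1 i : ℕ) = d + 1)
  symm := by
    refine ⟨?_⟩
    intro a b h i
    rcases h i with (h | h) | h
    · exact Or.inl (Or.inr h)
    · exact Or.inl (Or.inl h)
    · exact Or.inr ⟨h.2, h.1⟩
  loopless := by
    refine ⟨?_⟩
    intro a h
    obtain ⟨i, hi, -⟩ := a.2.1
    have hv : (a.1 i : ℕ) = 0 := by simp [hi]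
    rcases h i with (h | h) | ⟨h1, h2⟩ <;> omega

/-!
Given a homomorphism `φ : G →g Ω_{2d+1} K_n`, colour `v` by the zero coordinate of `φ v`. Along
an edge each coordinate changes by one or stays at `d + 1`. Along a walk of length `2d + 1`
between two vertices of colour `i`, coordinate `i` runs from `0` to `0` with no time to climb to
`d + 1` and come back, so it changes parity at every step: impossible for an odd length.

Conversely, given a proper colouring `γ` of `Γ_{2d+1} G`, send `v` to the vector of its
distances to the colour classes, truncated at `d + 1`. Two neighbours at the same distance
`k ≤ d` from a class would close a walk of length `2k + 1` between two vertices of that class,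
which backtracking along an edge stretches to length `2d + 1`.
-/

open SimpleGraph

variable {V : Type*} {G : SimpleGraph V}

theorem HasWalkLen.add_two_mul {ℓ : ℕ} {u v : V} (h : HasWalkLen G ℓ u v) (hℓ : 0 < ℓ)
    (m : ℕ) : HasWalkLen G (ℓ + 2 * m) u v := by
  obtain ⟨w, rfl⟩ := h
  cases w with
  | nil => simp at hℓ
  | cons hux w =>
    induction m with
    | zero => exact ⟨_, rfl⟩
    | succ m ih =>
      obtain ⟨w', hw'⟩ := ih
      exact ⟨.cons hux (.cons hux.symm w'), by simp only [Walk.length_cons] at hw' ⊢; omega⟩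

theorem IsWideColoring.ne_of_adj {d m : ℕ} {γ : V → Fin m}
    (hγ : IsWideColoring G (2 * d + 1) γ) {u v : V} (h : G.Adj u v) : γ u ≠ γ v :=
  hγ u v (by simpa [add_comm] using HasWalkLen.add_two_mul ⟨h.toWalk, rfl⟩ one_pos d)

section truncDist

variable (G) (S : Set V) (c : ℕ)

/-- The length of a shortest walk from `v` into `S`, or `c` if that is smaller. -/
noncomputable def truncDist (v : V) : ℕ :=
  sInf ({ℓ | ∃ u ∈ S, ∃ w : G.Walk v u, w.length = ℓ} ∪ {c})

variable {G S c}

theorem truncDist_le_cap (v : V) : truncDist G S c v ≤ c :=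
  Nat.sInf_le (Or.inr rfl)

theorem truncDist_le_length {v u : V} (hu : u ∈ S) (w : G.Walk v u) :
    truncDist G S c v ≤ w.length :=
  Nat.sInf_le (Or.inl ⟨u, hu, w, rfl⟩)

theorem exists_walk_of_truncDist_lt_cap {v : V} (h : truncDist G S c v < c) :
    ∃ u ∈ S, ∃ w : G.Walk v u, w.length = truncDist G S c v := by
  rcases Nat.sInf_mem (s := {ℓ | ∃ u ∈ S, ∃ w : G.Walk v u, w.length = ℓ} ∪ {c})
    ⟨c, Or.inr rfl⟩ with hmem | hmem
  · exact hmem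
  · exact absurd (Set.mem_singleton_iff.mp hmem) h.ne

theorem truncDist_eq_zero_iff (hc : 0 < c) {v : V} : truncDist G S c v = 0 ↔ v ∈ S := by
  refine ⟨fun h => ?_, fun hv => Nat.le_zero.mp (truncDist_le_length hv .nil)⟩
  obtain ⟨u, hu, w, hw⟩ := exists_walk_of_truncDist_lt_cap (h ▸ hc)
  rwa [Walk.eq_of_length_eq_zero (hw.trans h)]

theorem truncDist_le_succ_of_adj {v x : V} (h : G.Adj v x) :
    truncDist G S c v ≤ truncDist G S c x + 1 := by
  rcases (truncDist_le_cap (G := G) (S := S) x).lt_or_eq with hx | hx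
  · obtain ⟨u, hu, w, hw⟩ := exists_walk_of_truncDist_lt_cap hx
    simpa [hw] using truncDist_le_length hu (.cons h w)
  · have := truncDist_le_cap (G := G) (S := S) (c := c) v
    omega

end truncDist

/-- `(omegaK d n).Adj x y` unfolds to `∀ i, OmegaStep d (x.1 i) (y.1 i)`. -/
def OmegaStep (d a b : ℕ) : Prop :=
  (a + 1 = b ∨ b + 1 = a) ∨ (a = d + 1 ∧ b = d + 1)

/-- The second alternative records a stay at `d + 1`: getting there from `v` and then down to
`u` takes at least `(d + 1 - f v) + 1 + (d + 1)` steps. -/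
theorem SimpleGraph.Walk.omegaStep_invariant {d : ℕ} {f : V → ℕ}
    (hf : ∀ x y, G.Adj x y → OmegaStep d (f x) (f y))
    {v u : V} (w : G.Walk v u) (hu : f u = 0) :
    f v ≤ w.length ∧ (Even (f v + w.length) ∨ 2 * d + 3 ≤ f v + w.length) := by
  induction w with
  | nil => simp [hu]
  | cons h w ih =>
    have hstep := hf _ _ h
    simp only [OmegaStep, Walk.length_cons, Nat.even_iff] at hstep ih ⊢
    omega

theorem isWideColoring_of_omegaStep {d n : ℕ} {f : Fin n → V → ℕ}
    (hf : ∀ i x y, G.Adj x y → OmegaStep d (f i x) (f i y)) (γ : V → Fin n)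
    (hγ : ∀ v, f (γ v) v = 0) : IsWideColoring G (2 * d + 1) γ := by
  rintro u v ⟨w, hw⟩ huv
  have := w.omegaStep_invariant (hf (γ v)) (hγ v)
  rw [← huv, hγ u, hw, Nat.even_iff] at this
  omega

noncomputable def OmegaVert.zeroCoord {d n : ℕ} (x : OmegaVert d n) : Fin n :=
  x.2.1.exists.choose

theorem OmegaVert.apply_zeroCoord {d n : ℕ} (x : OmegaVert d n) : x.1 x.zeroCoord = 0 :=
  x.2.1.exists.choose_spec

theorem isWideColoring_zeroCoord_comp {d n : ℕ} (φ : G →g omegaK d n) :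
    IsWideColoring G (2 * d + 1) (fun v => (φ v).zeroCoord) :=
  isWideColoring_of_omegaStep (fun i x y h => φ.map_adj h i) _
    (fun v => by simp [OmegaVert.apply_zeroCoord])

section coloring

variable {d n : ℕ} {γ : V → Fin n}

theorem IsWideColoring.truncDist_ne_of_adj (hγ : IsWideColoring G (2 * d + 1) γ) (i : Fin n)
    {x y : V} (h : G.Adj x y) (hx : truncDist G {u | γ u = i} (d + 1) x ≤ d) :
    truncDist G {u | γ u = i} (d + 1) x ≠ truncDist G {u | γ u = i} (d + 1) y := by
  intro heq
  obtain ⟨u₁, hu₁, w₁, hw₁⟩ := exists_walk_of_truncDist_lt_cap (Nat.lt_succ_of_le hx)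
  obtain ⟨u₂, hu₂, w₂, hw₂⟩ := exists_walk_of_truncDist_lt_cap (heq ▸ Nat.lt_succ_of_le hx)
  have hodd : HasWalkLen G (2 * truncDist G {u | γ u = i} (d + 1) x + 1) u₁ u₂ :=
    ⟨w₁.reverse.append (.cons h w₂), by simp only [Walk.length_append, Walk.length_reverse,
      Walk.length_cons, hw₁, hw₂, heq]; ring⟩
  have hlong := hodd.add_two_mul (Nat.succ_pos _) (d - truncDist G {u | γ u = i} (d + 1) x)
  refine hγ u₁ u₂ ?_ (hu₁.trans hu₂.symm)
  convert hlong using 1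
  omega

theorem IsWideColoring.omegaStep_truncDist (hγ : IsWideColoring G (2 * d + 1) γ) (i : Fin n)
    {x y : V} (h : G.Adj x y) :
    OmegaStep d (truncDist G {u | γ u = i} (d + 1) x)
      (truncDist G {u | γ u = i} (d + 1) y) := by
  have hxy := truncDist_le_succ_of_adj (S := {u | γ u = i}) (c := d + 1) h
  have hyx := truncDist_le_succ_of_adj (S := {u | γ u = i}) (c := d + 1) h.symm
  have hx := truncDist_le_cap (G := G) (S := {u | γ u = i}) (c := d + 1) x
  have hne := hγ.truncDist_ne_of_adj i h
  unfold OmegaStep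
  omega

variable (G d γ) in
noncomputable def colorDistVec (v : V) : Fin n → Fin (d + 2) :=
  fun i => ⟨truncDist G {u | γ u = i} (d + 1) v, Nat.lt_succ_of_le (truncDist_le_cap v)⟩

theorem IsWideColoring.colorDistVec_mem (hγ : IsWideColoring G (2 * d + 1) γ) {v z : V}
    (h : G.Adj v z) :
    (∃! i, colorDistVec G d γ v i = 0) ∧ ∃ i, colorDistVec G d γ v i = 1 := by
  have hzero : ∀ i, colorDistVec G d γ v i = 0 ↔ γ v = i := fun i => by
    rw [Fin.ext_iff]
    exact truncDist_eq_zero_iff (Nat.succ_pos d)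
  refine ⟨⟨γ v, (hzero _).2 rfl, fun i hi => ((hzero i).1 hi).symm⟩, γ z, Fin.ext ?_⟩
  have hle : truncDist G {u | γ u = γ z} (d + 1) v ≤ 1 :=
    truncDist_le_length (S := {u | γ u = γ z}) rfl h.toWalk
  have hne : colorDistVec G d γ v (γ z) ≠ 0 := (hzero _).not.mpr (hγ.ne_of_adj h)
  rw [Ne, Fin.ext_iff] at hne
  rw [Fin.val_one]
  exact le_antisymm hle (Nat.one_le_iff_ne_zero.mpr hne)

theorem OmegaVert.nonempty (hn : 2 ≤ n) : Nonempty (OmegaVert d n) := by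
  refine ⟨⟨fun i => if (i : ℕ) = 0 then 0 else 1, ⟨⟨0, by omega⟩, by simp, fun i hi => ?_⟩,
    ⟨1, by omega⟩, by simp⟩⟩
  dsimp only at hi
  split_ifs at hi with h
  · exact Fin.ext h
  · simp at hi

noncomputable def IsWideColoring.toOmegaVert (hγ : IsWideColoring G (2 * d + 1) γ) {v : V}
    (hv : ∃ z, G.Adj v z) : OmegaVert d n :=
  ⟨colorDistVec G d γ v, hγ.colorDistVec_mem hv.choose_spec⟩

theorem IsWideColoring.nonempty_hom (hγ : IsWideColoring G (2 * d + 1) γ) (hn : 2 ≤ n) :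
    Nonempty (G →g omegaK d n) := by
  classical
  have := OmegaVert.nonempty (d := d) hn
  refine ⟨⟨fun v => if hv : ∃ z, G.Adj v z then hγ.toOmegaVert hv else Classical.arbitrary _,
    fun {x y} h => ?_⟩⟩
  rw [dif_pos ⟨y, h⟩, dif_pos ⟨x, h.symm⟩]
  exact fun i => hγ.omegaStep_truncDist i h

end coloring

theorem stmt_16_general {V : Type} (G : SimpleGraph V) (n d : ℕ)
    (hn : 2 ≤ n) :
    (∃ γ : V → Fin n, IsWideColoring G (2 * d + 1) γ) ↔
      Nonempty (G →g omegaK d n) :=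
  ⟨fun ⟨_, hγ⟩ => hγ.nonempty_hom hn, fun ⟨φ⟩ => ⟨_, isWideColoring_zeroCoord_comp φ⟩⟩

/-- `Γ_{2d+1} G` admits a proper `n`-coloring iff `G` admits a graph
homomorphism to `Ω_{2d+1} K_n`. -/
theorem stmt_16 {V : Type} [Fintype V] (G : SimpleGraph V) (n d : ℕ)
    (hn : 2 ≤ n) (hd : 1 ≤ d) :
    (∃ γ : V → Fin n, IsWideColoring G (2 * d + 1) γ) ↔
      Nonempty (G →g omegaK d n) :=
  stmt_16_general G n d hn
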